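/- Let H be a commutative Hopf algebra over ℂ that is positively graded and connected, and let α(t), t ∈ [a,b], be a family of infinitesimal characters of H with values in ℂ such that t ↦ α(t)(x) is continuous for every x ∈ H. For t ∈ [a,b] set g_t := Te^{∫_a^t α(s)ds}. Then for every x ∈ H the function t ↦ g_t(x) is continuously differentiable on [a,b] with d/dt g_t(x) = (g_t ⋆ α(t))(x) and g_a(x) = ε(x); moreover g is the unique such solution: if h_t, t ∈ [a,b], is any family of linear functionals on H with h_a = ε and, for every x ∈ H, t ↦ h_t(x) differentiable with d/dt h_t(x) = (h_t ⋆ α(t))(x), then h_t = g_t for all t ∈ [a,b]. -/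

import Mathlib

/-!
Statement 8: the expansional `g_t = Te^{∫_a^t α(s)ds}` solves the differential equation
`dg_t/dt = g_t ⋆ α(t)` with initial condition `g_a = ε`, and it is the unique such
solution among families of linear functionals.
-/

open TensorProduct MeasureTheory

noncomputable section

/-- Convolution product of linear functionals on a Hopf algebra:
`φ ⋆ ψ = (φ ⊗ ψ) ∘ Δ`. -/
def conv {H : Type} [CommRing H] [HopfAlgebra ℂ H] (f g : H →ₗ[ℂ] ℂ) : H →ₗ[ℂ] ℂ :=
  LinearMap.mul' ℂ ℂ ∘ₗ TensorProduct.map f g ∘ₗ Coalgebra.comul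

/-- Iterated convolution `α₁ ⋆ ⋯ ⋆ α_m = (α₁ ⊗ ⋯ ⊗ α_m) ∘ Δ^{(m-1)}` of a finite family
of linear functionals (the empty convolution being the counit). -/
def convFam {H : Type} [CommRing H] [HopfAlgebra ℂ H] :
    (m : ℕ) → (Fin m → (H →ₗ[ℂ] ℂ)) → (H →ₗ[ℂ] ℂ)
  | 0, _ => Coalgebra.counit
  | m + 1, f => conv (f 0) (convFam m fun i => f i.succ)

/-- An infinitesimal character of `H` with values in ℂ:
`L(xy) = L(x)ε(y) + ε(x)L(y)`. -/
def IsInfinitesimalCharacter {H : Type} [CommRing H] [HopfAlgebra ℂ H]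
    (L : H →ₗ[ℂ] ℂ) : Prop :=
  ∀ x y : H,
    L (x * y) = L x * Coalgebra.counit (R := ℂ) y + Coalgebra.counit (R := ℂ) x * L y

/-- The ordered simplex `{a ≤ s₁ ≤ s₂ ≤ ⋯ ≤ s_m ≤ b}`. -/
def orderedSimplex (m : ℕ) (a b : ℝ) : Set (Fin m → ℝ) :=
  {s | (∀ i j : Fin m, i ≤ j → s i ≤ s j) ∧ ∀ i, s i ∈ Set.Icc a b}

/-- The expansional (time-ordered exponential)
`Te^{∫_a^b α(t)dt} = ε + Σ_{m≥1} ∫_{a≤s₁≤⋯≤s_m≤b} α(s₁) ⋆ ⋯ ⋆ α(s_m) ds₁⋯ds_m`,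
evaluated on an element `x` of the Hopf algebra. -/
def expansional {H : Type} [CommRing H] [HopfAlgebra ℂ H]
    (α : ℝ → (H →ₗ[ℂ] ℂ)) (a b : ℝ) (x : H) : ℂ :=
  Coalgebra.counit (R := ℂ) x +
    ∑' m : ℕ, ∫ s in orderedSimplex (m + 1) a b, convFam (m + 1) (fun i => α (s i)) x

section ExpODELemmas
variable {H : Type} [CommRing H] [HopfAlgebra ℂ H]

lemma conv_apply_sum (f g : H →ₗ[ℂ] ℂ) {x : H} {S : Finset (H × H)}
    (h : Coalgebra.comul (R := ℂ) x = ∑ p ∈ S, p.1 ⊗ₜ[ℂ] p.2) :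
    conv f g x = ∑ p ∈ S, f p.1 * g p.2 := by
  simp [conv, h, LinearMap.mul'_apply, map_sum]

lemma conv_counit_left (f : H →ₗ[ℂ] ℂ) : conv Coalgebra.counit f = f := by
  ext x
  have h1 : TensorProduct.map (Coalgebra.counit (R := ℂ) (A := H)) f
      = f.lTensor ℂ ∘ₗ (Coalgebra.counit (R := ℂ) (A := H)).rTensor H := by
    ext y z; simp
  simp only [conv, LinearMap.comp_apply, h1, Coalgebra.rTensor_counit_comul]
  simp [LinearMap.mul'_apply]

lemma conv_counit_right (f : H →ₗ[ℂ] ℂ) : conv f Coalgebra.counit = f := by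
  ext x
  have h1 : TensorProduct.map f (Coalgebra.counit (R := ℂ) (A := H))
      = f.rTensor ℂ ∘ₗ (Coalgebra.counit (R := ℂ) (A := H)).lTensor H := by
    ext y z; simp
  simp only [conv, LinearMap.comp_apply, h1, Coalgebra.lTensor_counit_comul]
  simp [LinearMap.mul'_apply]

lemma conv_assoc (f g h : H →ₗ[ℂ] ℂ) : conv f (conv g h) = conv (conv f g) h := by
  have hA : (LinearMap.mul' ℂ ℂ ∘ₗ TensorProduct.map f (conv g h) : H ⊗[ℂ] H →ₗ[ℂ] ℂ)
      = (LinearMap.mul' ℂ ℂ ∘ₗ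
          TensorProduct.map f (LinearMap.mul' ℂ ℂ ∘ₗ TensorProduct.map g h)) ∘ₗ
          (Coalgebra.comul (R := ℂ) (A := H)).lTensor H := by
    ext y z; simp [conv, LinearMap.mul'_apply]
  have hB : (LinearMap.mul' ℂ ℂ ∘ₗ TensorProduct.map (conv f g) h : H ⊗[ℂ] H →ₗ[ℂ] ℂ)
      = (LinearMap.mul' ℂ ℂ ∘ₗ
          TensorProduct.map (LinearMap.mul' ℂ ℂ ∘ₗ TensorProduct.map f g) h) ∘ₗ
          (Coalgebra.comul (R := ℂ) (A := H)).rTensor H := by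
    ext y z; simp [conv, LinearMap.mul'_apply]
  have hC : (LinearMap.mul' ℂ ℂ ∘ₗ
          TensorProduct.map f (LinearMap.mul' ℂ ℂ ∘ₗ TensorProduct.map g h)) ∘ₗ
          (TensorProduct.assoc ℂ H H H).toLinearMap
      = LinearMap.mul' ℂ ℂ ∘ₗ
          TensorProduct.map (LinearMap.mul' ℂ ℂ ∘ₗ TensorProduct.map f g) h := by
    apply TensorProduct.ext_threefold
    intro y z w
    simp [LinearMap.mul'_apply, mul_assoc]
  ext x
  have := Coalgebra.coassoc_apply (R := ℂ) (a := x)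
  calc conv f (conv g h) x
      = (LinearMap.mul' ℂ ℂ ∘ₗ TensorProduct.map f (conv g h)) (Coalgebra.comul x) := rfl
    _ = ((LinearMap.mul' ℂ ℂ ∘ₗ
          TensorProduct.map f (LinearMap.mul' ℂ ℂ ∘ₗ TensorProduct.map g h)))
          ((Coalgebra.comul (R := ℂ)).lTensor H (Coalgebra.comul x)) := by
        rw [hA]; rfl
    _ = ((LinearMap.mul' ℂ ℂ ∘ₗ
          TensorProduct.map f (LinearMap.mul' ℂ ℂ ∘ₗ TensorProduct.map g h)))
          ((TensorProduct.assoc ℂ H H H)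
            ((Coalgebra.comul (R := ℂ)).rTensor H (Coalgebra.comul x))) := by rw [this]
    _ = (LinearMap.mul' ℂ ℂ ∘ₗ
          TensorProduct.map (LinearMap.mul' ℂ ℂ ∘ₗ TensorProduct.map f g) h)
          ((Coalgebra.comul (R := ℂ)).rTensor H (Coalgebra.comul x)) := by
        rw [← hC]; rfl
    _ = conv (conv f g) h x := by
        have hr : conv (conv f g) h x
            = (LinearMap.mul' ℂ ℂ ∘ₗ TensorProduct.map (conv f g) h) (Coalgebra.comul x) := rfl
        rw [hr, hB]; rfl

lemma convFam_succ (m : ℕ) (f : Fin (m+1) → (H →ₗ[ℂ] ℂ)) :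
    convFam (m+1) f = conv (f 0) (convFam m fun i => f i.succ) := rfl

lemma convFam_snoc (m : ℕ) (f : Fin (m+1) → (H →ₗ[ℂ] ℂ)) :
    convFam (m+1) f = conv (convFam m fun i => f i.castSucc) (f (Fin.last m)) := by
  induction m with
  | zero =>
      simp [convFam, conv_counit_right, conv_counit_left]
  | succ m ih =>
      rw [convFam_succ, ih (fun i => f i.succ), conv_assoc, convFam_succ]
      have h2 : (Fin.last m).succ = Fin.last (m+1) := by simp [Fin.ext_iff]
      have h0 : ((0 : Fin (m+1)).castSucc) = (0 : Fin (m+2)) := by simp [Fin.ext_iff]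
      rw [h2]
      congr 2

lemma infChar_one {L : H →ₗ[ℂ] ℂ} (hL : IsInfinitesimalCharacter L) : L (1 : H) = 0 := by
  have h := hL 1 1
  rw [one_mul, Bialgebra.counit_one] at h
  ring_nf at h
  linear_combination -h

lemma infChar_deg0 {𝒜 : ℕ → Submodule ℂ H} (hconn : 𝒜 0 = Submodule.span ℂ {(1 : H)})
    {L : H →ₗ[ℂ] ℂ} (hL : IsInfinitesimalCharacter L) {x : H} (hx : x ∈ 𝒜 0) : L x = 0 := by
  rw [hconn, Submodule.mem_span_singleton] at hx
  obtain ⟨c, rfl⟩ := hx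
  simp [infChar_one hL]

lemma comul_ann {𝒜 : ℕ → Submodule ℂ H}
    (hcomul : ∀ (n : ℕ) (x : H), x ∈ 𝒜 n →
      Coalgebra.comul (R := ℂ) x ∈ ⨆ (p : ℕ) (_ : p ≤ n),
        LinearMap.range (TensorProduct.map (𝒜 p).subtype (𝒜 (n - p)).subtype))
    {n : ℕ} {x : H} (hx : x ∈ 𝒜 n) (ℓ : H ⊗[ℂ] H →ₗ[ℂ] ℂ)
    (hz : ∀ p ≤ n, ∀ y ∈ 𝒜 p, ∀ z ∈ 𝒜 (n - p), ℓ (y ⊗ₜ[ℂ] z) = 0) :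
    ℓ (Coalgebra.comul (R := ℂ) x) = 0 := by
  have hle : (⨆ (p : ℕ) (_ : p ≤ n),
      LinearMap.range (TensorProduct.map (𝒜 p).subtype (𝒜 (n - p)).subtype))
      ≤ LinearMap.ker ℓ := by
    refine iSup₂_le fun p hp => ?_
    rintro w ⟨v, rfl⟩
    induction v with
    | zero => simp
    | tmul y z =>
        simp only [LinearMap.mem_ker, TensorProduct.map_tmul, Submodule.coe_subtype]
        exact hz p hp y.1 y.2 z.1 z.2
    | add v w hv hw =>
        simp only [LinearMap.mem_ker, map_add] at hv hw ⊢
        rw [hv, hw, add_zero]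
  exact hle (hcomul n x hx)

lemma convFam_vanish {𝒜 : ℕ → Submodule ℂ H}
    (hcomul : ∀ (n : ℕ) (x : H), x ∈ 𝒜 n →
      Coalgebra.comul (R := ℂ) x ∈ ⨆ (p : ℕ) (_ : p ≤ n),
        LinearMap.range (TensorProduct.map (𝒜 p).subtype (𝒜 (n - p)).subtype))
    (hconn : 𝒜 0 = Submodule.span ℂ {(1 : H)}) :
    ∀ m n, n < m → ∀ x ∈ 𝒜 n, ∀ f : Fin m → (H →ₗ[ℂ] ℂ),
      (∀ i, IsInfinitesimalCharacter (f i)) → convFam m f x = 0 := by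
  intro m
  induction m with
  | zero => intro n hn; omega
  | succ m ih =>
      intro n hn x hx f hf
      have : convFam (m+1) f x
          = ((LinearMap.mul' ℂ ℂ ∘ₗ TensorProduct.map (f 0) (convFam m fun i => f i.succ)))
            (Coalgebra.comul (R := ℂ) x) := rfl
      rw [this]
      refine comul_ann hcomul hx _ ?_
      intro p hp y hy z hz
      simp only [LinearMap.comp_apply, TensorProduct.map_tmul, LinearMap.mul'_apply]
      rcases Nat.eq_zero_or_pos p with h0 | h0
      · subst h0
        rw [infChar_deg0 hconn (hf 0) hy, zero_mul]
      · rw [ih (n - p) (by omega) z hz _ (fun i => hf i.succ), mul_zero]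

/-- Every element is annihilated by long enough convolutions of infinitesimal characters. -/
lemma exists_convFam_bound {𝒜 : ℕ → Submodule ℂ H}
    (hinternal : DirectSum.IsInternal 𝒜)
    (hcomul : ∀ (n : ℕ) (x : H), x ∈ 𝒜 n →
      Coalgebra.comul (R := ℂ) x ∈ ⨆ (p : ℕ) (_ : p ≤ n),
        LinearMap.range (TensorProduct.map (𝒜 p).subtype (𝒜 (n - p)).subtype))
    (hconn : 𝒜 0 = Submodule.span ℂ {(1 : H)}) (x : H) :
    ∃ N : ℕ, ∀ m, N < m → ∀ f : Fin m → (H →ₗ[ℂ] ℂ),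
      (∀ i, IsInfinitesimalCharacter (f i)) → convFam m f x = 0 := by
  have htop : x ∈ ⨆ i, 𝒜 i := by
    rw [hinternal.submodule_iSup_eq_top]; trivial
  refine Submodule.iSup_induction 𝒜 (motive := fun x => ∃ N : ℕ, ∀ m, N < m →
      ∀ f : Fin m → (H →ₗ[ℂ] ℂ), (∀ i, IsInfinitesimalCharacter (f i)) → convFam m f x = 0)
    htop ?_ ?_ ?_
  · intro n y hy
    exact ⟨n, fun m hm f hf => convFam_vanish hcomul hconn m n hm y hy f hf⟩
  · exact ⟨0, fun m _ f _ => by simp⟩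
  · rintro y z ⟨N1, h1⟩ ⟨N2, h2⟩
    refine ⟨max N1 N2, fun m hm f hf => ?_⟩
    rw [map_add, h1 m (by omega) f hf, h2 m (by omega) f hf, add_zero]

/-- Representation of an iterated convolution as a finite sum of products. -/
lemma convFam_rep (m : ℕ) (x : H) :
    ∃ T : Multiset (ℂ × (Fin m → H)),
      ∀ f : Fin m → (H →ₗ[ℂ] ℂ),
        convFam m f x = (T.map fun q => q.1 * ∏ i, f i (q.2 i)).sum := by
  induction m generalizing x with
  | zero =>
      exact ⟨{(Coalgebra.counit (R := ℂ) x, fun i => i.elim0)}, fun f => by simp [convFam]⟩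
  | succ m ih =>
      obtain ⟨S, hS⟩ := TensorProduct.exists_finset (Coalgebra.comul (R := ℂ) x)
      choose T hT using fun z : H => ih z
      refine ⟨S.val.bind fun p => (T p.2).map fun q => (q.1, Fin.cons p.1 q.2), fun f => ?_⟩
      rw [convFam_succ, conv_apply_sum _ _ hS]
      rw [Multiset.map_bind, Multiset.sum_bind]
      rw [Finset.sum_eq_multiset_sum]
      congr 1
      refine Multiset.map_congr rfl fun p _ => ?_
      rw [hT p.2 (fun i => f i.succ), ← Multiset.sum_map_mul_left, Multiset.map_map]
      refine congrArg Multiset.sum (Multiset.map_congr rfl fun q _ => ?_)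
      simp only [Function.comp_apply]
      rw [Fin.prod_univ_succ]
      simp only [Fin.cons_zero, Fin.cons_succ]
      ring


lemma isClosed_orderedSimplex (m : ℕ) (a b : ℝ) : IsClosed (orderedSimplex m a b) := by
  have h1 : IsClosed {s : Fin m → ℝ | ∀ i j : Fin m, i ≤ j → s i ≤ s j} := by
    have he : {s : Fin m → ℝ | ∀ i j : Fin m, i ≤ j → s i ≤ s j}
        = ⋂ i, ⋂ j, {s : Fin m → ℝ | i ≤ j → s i ≤ s j} := by
      ext s; simp [Set.mem_iInter]
    rw [he]
    refine isClosed_iInter fun i => isClosed_iInter fun j => ?_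
    by_cases hij : i ≤ j
    · have : {s : Fin m → ℝ | i ≤ j → s i ≤ s j} = {s | s i ≤ s j} := by
        ext s; simp [hij]
      rw [this]
      exact isClosed_le (continuous_apply i) (continuous_apply j)
    · have : {s : Fin m → ℝ | i ≤ j → s i ≤ s j} = Set.univ := by
        ext s; simp [hij]
      rw [this]; exact isClosed_univ
  have h2 : IsClosed {s : Fin m → ℝ | ∀ i, s i ∈ Set.Icc a b} := by
    have he : {s : Fin m → ℝ | ∀ i, s i ∈ Set.Icc a b}
        = ⋂ i, (fun s : Fin m → ℝ => s i) ⁻¹' Set.Icc a b := by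
      ext s; simp [Set.mem_iInter]
    rw [he]
    exact isClosed_iInter fun i => isClosed_Icc.preimage (continuous_apply i)
  exact h1.inter h2

lemma isCompact_orderedSimplex (m : ℕ) (a b : ℝ) : IsCompact (orderedSimplex m a b) := by
  refine IsCompact.of_isClosed_subset (isCompact_Icc (a := fun _ : Fin m => a)
    (b := fun _ => b)) (isClosed_orderedSimplex m a b) ?_
  intro s hs
  exact ⟨fun i => (hs.2 i).1, fun i => (hs.2 i).2⟩

lemma measurableSet_orderedSimplex (m : ℕ) (a b : ℝ) :
    MeasurableSet (orderedSimplex m a b) :=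
  (isClosed_orderedSimplex m a b).measurableSet

lemma continuous_convFam_eval {β : ℝ → (H →ₗ[ℂ] ℂ)}
    (hβcont : ∀ x : H, Continuous fun t => β t x) (m : ℕ) (x : H) :
    Continuous fun s : Fin m → ℝ => convFam m (fun i => β (s i)) x := by
  obtain ⟨T, hT⟩ := convFam_rep m x
  have he : (fun s : Fin m → ℝ => convFam m (fun i => β (s i)) x)
      = fun s => (T.map fun q => q.1 * ∏ i, β (s i) (q.2 i)).sum := by
    funext s; exact hT _
  rw [he]
  clear he hT
  induction T using Multiset.induction_on with
  | empty => simp only [Multiset.map_zero, Multiset.sum_zero]; exact continuous_const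
  | cons q T ihT =>
      simp only [Multiset.map_cons, Multiset.sum_cons]
      refine Continuous.add ?_ ihT
      refine continuous_const.mul ?_
      exact continuous_finset_prod _ fun i _ => (hβcont (q.2 i)).comp (continuous_apply i)

/-- The basic iterated integral, clamped below at `a`. -/
def Pint (β : ℝ → (H →ₗ[ℂ] ℂ)) (a : ℝ) (m : ℕ) (t : ℝ) (x : H) : ℂ :=
  ∫ s in orderedSimplex m a (a ⊔ t), convFam m (fun i => β (s i)) x

lemma Pint_integrableOn {β : ℝ → (H →ₗ[ℂ] ℂ)}
    (hβcont : ∀ x : H, Continuous fun t => β t x) (a : ℝ) (m : ℕ) (u v : ℝ) (x : H) :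
    IntegrableOn (fun s : Fin m → ℝ => convFam m (fun i => β (s i)) x)
      (orderedSimplex m u v) := by
  exact (continuous_convFam_eval hβcont m x).continuousOn.integrableOn_compact
    (isCompact_orderedSimplex m u v)

lemma Pint_add {β : ℝ → (H →ₗ[ℂ] ℂ)} (hβcont : ∀ x : H, Continuous fun t => β t x)
    (a : ℝ) (m : ℕ) (t : ℝ) (x y : H) :
    Pint β a m t (x + y) = Pint β a m t x + Pint β a m t y := by
  unfold Pint
  rw [← integral_add (Pint_integrableOn hβcont a m _ _ x) (Pint_integrableOn hβcont a m _ _ y)]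
  simp

lemma Pint_smul {β : ℝ → (H →ₗ[ℂ] ℂ)} (a : ℝ) (m : ℕ) (t : ℝ) (c : ℂ) (x : H) :
    Pint β a m t (c • x) = c * Pint β a m t x := by
  unfold Pint
  rw [← integral_const_mul]
  congr 1; funext s
  simp [smul_eq_mul]

lemma Pint_zero_of_bound {β : ℝ → (H →ₗ[ℂ] ℂ)}
    (hβchar : ∀ t, IsInfinitesimalCharacter (β t)) (a : ℝ) {m : ℕ} {x : H} {N : ℕ}
    (hN : ∀ k, N < k → ∀ f : Fin k → (H →ₗ[ℂ] ℂ),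
      (∀ i, IsInfinitesimalCharacter (f i)) → convFam k f x = 0)
    (hm : N < m) (t : ℝ) : Pint β a m t x = 0 := by
  unfold Pint
  have : (fun s : Fin m → ℝ => convFam m (fun i => β (s i)) x) = fun _ => (0 : ℂ) := by
    funext s; exact hN m hm _ (fun i => hβchar (s i))
  rw [this]
  simp

lemma Pint_at_le {β : ℝ → (H →ₗ[ℂ] ℂ)} (a : ℝ) (m : ℕ) {t : ℝ} (ht : t ≤ a) (x : H) :
    Pint β a (m + 1) t x = 0 := by
  unfold Pint
  have hsup : a ⊔ t = a := sup_eq_left.2 ht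
  rw [hsup]
  have hnull : (volume : Measure (Fin (m+1) → ℝ)) (orderedSimplex (m+1) a a) = 0 := by
    have hsub : orderedSimplex (m+1) a a ⊆ Set.pi Set.univ fun _ : Fin (m+1) => ({a} : Set ℝ) := by
      intro s hs
      simp only [Set.mem_pi, Set.mem_univ, Set.mem_singleton_iff, forall_true_left]
      intro i
      have := hs.2 i
      simp only [Set.Icc_self, Set.mem_singleton_iff] at this
      exact this
    refine measure_mono_null hsub ?_
    rw [volume_pi_pi]
    simp
  rw [Measure.restrict_eq_zero.mpr hnull]
  simp

lemma Pint_zero_apply {β : ℝ → (H →ₗ[ℂ] ℂ)} (a : ℝ) (t : ℝ) (x : H) :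
    Pint β a 0 t x = Coalgebra.counit (R := ℂ) x := by
  unfold Pint
  have huniv : orderedSimplex 0 a (a ⊔ t) = Set.univ := by
    ext s; constructor
    · intro _; trivial
    · intro _; exact ⟨fun i => i.elim0, fun i => i.elim0⟩
  have hfun : (fun s : Fin 0 → ℝ => (convFam 0 fun i => β (s i)) x)
      = fun _ => Coalgebra.counit (R := ℂ) x := rfl
  have h1 : (volume : Measure (Fin 0 → ℝ)) Set.univ = 1 := by
    rw [show (Set.univ : Set (Fin 0 → ℝ)) = Set.pi Set.univ (fun _ : Fin 0 => Set.univ) by simp,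
      volume_pi_pi]
    simp
  rw [huniv, Measure.restrict_univ, hfun, integral_const, measureReal_def, h1]
  simp

lemma Pint_rec {β : ℝ → (H →ₗ[ℂ] ℂ)}
    (hβcont : ∀ x : H, Continuous fun t => β t x)
    (a : ℝ) (m : ℕ) (y : H) {S : Finset (H × H)}
    (hS : Coalgebra.comul (R := ℂ) y = ∑ p ∈ S, p.1 ⊗ₜ[ℂ] p.2)
    {t : ℝ} (hat : a ≤ t) :
    Pint β a (m+1) t y = ∫ u in a..t, ∑ p ∈ S, Pint β a m u p.1 * β u p.2 := by
  classical
  set e : (Fin (m+1) → ℝ) ≃ᵐ ℝ × (Fin m → ℝ) :=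
    MeasurableEquiv.piFinSuccAbove (fun _ : Fin (m+1) => ℝ) (Fin.last m) with he
  set G : (Fin (m+1) → ℝ) → ℂ := fun s => convFam (m+1) (fun i => β (s i)) y with hG
  set B : Set (ℝ × (Fin m → ℝ)) :=
    {p | p.1 ∈ Set.Icc a t ∧ p.2 ∈ orderedSimplex m a p.1} with hB
  have hsupt : a ⊔ t = t := sup_eq_right.2 hat
  -- the pulled-back integrand
  set gfun : ℝ × (Fin m → ℝ) → ℂ :=
    fun p => G (Fin.insertNth (α := fun _ : Fin (m+1) => ℝ) (Fin.last m) p.1 p.2) with hgfun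
  have hesymm : ∀ p : ℝ × (Fin m → ℝ), e.symm p = Fin.insertNth (α := fun _ : Fin (m+1) => ℝ) (Fin.last m) p.1 p.2 := by
    intro p
    rw [he]
    rw [MeasurableEquiv.piFinSuccAbove_symm_apply]
    rfl
  have heapp : ∀ s : Fin (m+1) → ℝ,
      e s = (s (Fin.last m), fun j => s (Fin.castSucc j)) := by
    intro s
    refine Prod.ext rfl ?_
    funext j
    show s ((Fin.last m).succAbove j) = s j.castSucc
    rw [Fin.succAbove_last]
  -- the simplex is the preimage of B
  have hAB : orderedSimplex (m+1) a t = e ⁻¹' B := by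
    ext s
    rw [Set.mem_preimage, hB, Set.mem_setOf_eq, heapp s]
    constructor
    · rintro ⟨hmono, hbd⟩
      refine ⟨⟨(hbd _).1, (hbd _).2⟩, ?_, ?_⟩
      · intro i j hij
        exact hmono _ _ (by simpa using hij)
      · intro i
        exact ⟨(hbd _).1, hmono _ _ (Fin.le_last _)⟩
    · rintro ⟨⟨ha1, ht1⟩, hmono, hbd⟩
      constructor
      · intro i j hij
        rcases Fin.eq_castSucc_or_eq_last j with ⟨j', rfl⟩ | rfl
        · rcases Fin.eq_castSucc_or_eq_last i with ⟨i', rfl⟩ | rfl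
          · exact hmono i' j' (by simpa using hij)
          · exact absurd hij (not_le.2 (Fin.castSucc_lt_last j'))
        · rcases Fin.eq_castSucc_or_eq_last i with ⟨i', rfl⟩ | rfl
          · exact (hbd i').2
          · exact le_rfl
      · intro i
        rcases Fin.eq_castSucc_or_eq_last i with ⟨i', rfl⟩ | rfl
        · exact ⟨(hbd i').1, le_trans (hbd i').2 ht1⟩
        · exact ⟨ha1, ht1⟩
  -- continuity and compactness facts
  have hGcont : Continuous G := continuous_convFam_eval hβcont (m+1) y
  have hins : Continuous fun p : ℝ × (Fin m → ℝ) => Fin.insertNth (α := fun _ : Fin (m+1) => ℝ) (Fin.last m) p.1 p.2 := by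
    refine continuous_pi fun i => ?_
    refine Fin.lastCases ?_ ?_ i
    · simp only [Fin.insertNth_apply_same]
      exact continuous_fst
    · intro j
      have : ∀ p : ℝ × (Fin m → ℝ),
          Fin.insertNth (α := fun _ : Fin (m+1) => ℝ) (Fin.last m) p.1 p.2 (Fin.castSucc j) = p.2 j := by
        intro p
        rw [← Fin.succAbove_last, Fin.insertNth_apply_succAbove]
      simp only [this]
      exact (continuous_apply j).comp continuous_snd
  have hgcont : Continuous gfun := hGcont.comp hins
  have hBclosed : IsClosed B := by
    have h1 : IsClosed {p : ℝ × (Fin m → ℝ) | p.1 ∈ Set.Icc a t} :=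
      (isClosed_Icc).preimage continuous_fst
    have h2 : IsClosed {p : ℝ × (Fin m → ℝ) | ∀ i j : Fin m, i ≤ j → p.2 i ≤ p.2 j} := by
      have he2 : {p : ℝ × (Fin m → ℝ) | ∀ i j : Fin m, i ≤ j → p.2 i ≤ p.2 j}
          = ⋂ i, ⋂ j, {p : ℝ × (Fin m → ℝ) | i ≤ j → p.2 i ≤ p.2 j} := by
        ext p; simp [Set.mem_iInter]
      rw [he2]
      refine isClosed_iInter fun i => isClosed_iInter fun j => ?_
      by_cases hij : i ≤ j
      · have : {p : ℝ × (Fin m → ℝ) | i ≤ j → p.2 i ≤ p.2 j} = {p | p.2 i ≤ p.2 j} := by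
          ext p; simp [hij]
        rw [this]
        exact isClosed_le ((continuous_apply i).comp continuous_snd)
          ((continuous_apply j).comp continuous_snd)
      · have : {p : ℝ × (Fin m → ℝ) | i ≤ j → p.2 i ≤ p.2 j} = Set.univ := by
          ext p; simp [hij]
        rw [this]; exact isClosed_univ
    have h3 : IsClosed {p : ℝ × (Fin m → ℝ) | ∀ i, a ≤ p.2 i ∧ p.2 i ≤ p.1} := by
      have he3 : {p : ℝ × (Fin m → ℝ) | ∀ i, a ≤ p.2 i ∧ p.2 i ≤ p.1}
          = ⋂ i, ({p : ℝ × (Fin m → ℝ) | a ≤ p.2 i} ∩ {p | p.2 i ≤ p.1}) := by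
        ext p; simp only [Set.mem_iInter, Set.mem_setOf_eq, Set.mem_inter_iff]
      rw [he3]
      refine isClosed_iInter fun i => IsClosed.inter ?_ ?_
      · exact isClosed_le continuous_const ((continuous_apply i).comp continuous_snd)
      · exact isClosed_le ((continuous_apply i).comp continuous_snd) continuous_fst
    have hBeq : B = {p : ℝ × (Fin m → ℝ) | p.1 ∈ Set.Icc a t}
        ∩ ({p : ℝ × (Fin m → ℝ) | ∀ i j : Fin m, i ≤ j → p.2 i ≤ p.2 j}
          ∩ {p : ℝ × (Fin m → ℝ) | ∀ i, a ≤ p.2 i ∧ p.2 i ≤ p.1}) := by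
      rw [hB]; ext p
      simp only [Set.mem_setOf_eq, Set.mem_inter_iff]
      constructor
      · rintro ⟨hp1, hmono, hbd⟩
        exact ⟨hp1, hmono, fun i => ⟨(hbd i).1, (hbd i).2⟩⟩
      · rintro ⟨hp1, hmono, hbd⟩
        exact ⟨hp1, hmono, fun i => ⟨(hbd i).1, (hbd i).2⟩⟩
    rw [hBeq]; exact h1.inter (h2.inter h3)
  have hBmeas : MeasurableSet B := hBclosed.measurableSet
  have hBcompact : IsCompact B := by
    refine IsCompact.of_isClosed_subset
      (isCompact_Icc (a := ((a, fun _ => a) : ℝ × (Fin m → ℝ))) (b := (t, fun _ => t)))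
      hBclosed ?_
    rintro ⟨u, sr⟩ ⟨hu, _, hbd⟩
    refine ⟨⟨hu.1, fun i => (hbd i).1⟩, ⟨hu.2, fun i => le_trans (hbd i).2 hu.2⟩⟩
  have hIB : IntegrableOn gfun B := hgcont.continuousOn.integrableOn_compact hBcompact
  have hint : Integrable (B.indicator gfun) (volume.prod volume) := by
    rw [← Measure.volume_eq_prod]
    exact (integrable_indicator_iff hBmeas).2 hIB
  have pointwise1 : ∀ u : ℝ, (∫ sr : Fin m → ℝ, B.indicator gfun (u, sr))
      = (Set.Icc a t).indicator
          (fun u' => ∫ sr in orderedSimplex m a u', gfun (u', sr)) u := by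
    intro u
    by_cases hu : u ∈ Set.Icc a t
    · have hsec : (fun sr => B.indicator gfun (u, sr))
          = (orderedSimplex m a u).indicator (fun sr => gfun (u, sr)) := by
        funext sr
        by_cases hsr : sr ∈ orderedSimplex m a u
        · rw [Set.indicator_of_mem hsr, Set.indicator_of_mem]
          exact ⟨hu, hsr⟩
        · rw [Set.indicator_of_notMem hsr, Set.indicator_of_notMem]
          intro hmem; exact hsr hmem.2
      rw [hsec, integral_indicator (measurableSet_orderedSimplex m a u),
        Set.indicator_of_mem hu]
    · have hsec : (fun sr => B.indicator gfun (u, sr)) = fun _ => (0 : ℂ) := by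
        funext sr
        rw [Set.indicator_of_notMem]
        intro hmem; exact hu hmem.1
      rw [hsec, integral_zero, Set.indicator_of_notMem hu]
  have pointwise2 : ∀ u ∈ Set.Icc a t,
      (∫ sr in orderedSimplex m a u, gfun (u, sr))
        = ∑ p ∈ S, Pint β a m u p.1 * β u p.2 := by
    intro u hu
    have hgf : ∀ sr : Fin m → ℝ,
        gfun (u, sr) = ∑ p ∈ S, convFam m (fun i => β (sr i)) p.1 * β u p.2 := by
      intro sr
      have h1 : gfun (u, sr) = conv (convFam m fun i => β (sr i)) (β u) y := by
        rw [hgfun, hG]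
        dsimp only
        rw [convFam_snoc]
        congr 2
        · congr 1
          funext j
          congr 1
          rw [← Fin.succAbove_last, Fin.insertNth_apply_succAbove]
        · rw [Fin.insertNth_apply_same]
      rw [h1, conv_apply_sum _ _ hS]
    calc (∫ sr in orderedSimplex m a u, gfun (u, sr))
        = ∫ sr in orderedSimplex m a u,
            ∑ p ∈ S, convFam m (fun i => β (sr i)) p.1 * β u p.2 := by
          rw [show (fun sr : Fin m → ℝ => gfun (u, sr))
            = fun sr => ∑ p ∈ S, convFam m (fun i => β (sr i)) p.1 * β u p.2 from funext hgf]
      _ = ∑ p ∈ S, ∫ sr in orderedSimplex m a u,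
            convFam m (fun i => β (sr i)) p.1 * β u p.2 :=
          integral_finset_sum S fun p _ =>
            ((Pint_integrableOn hβcont a m a u p.1).mul_const _)
      _ = ∑ p ∈ S, (∫ sr in orderedSimplex m a u,
            convFam m (fun i => β (sr i)) p.1) * β u p.2 := by
          refine Finset.sum_congr rfl fun p _ => ?_
          rw [show (fun sr : Fin m → ℝ => convFam m (fun i => β (sr i)) p.1 * β u p.2)
            = fun sr => convFam m (fun i => β (sr i)) p.1 • (β u p.2 : ℂ) from
            funext fun sr => by rw [smul_eq_mul], integral_smul_const, smul_eq_mul]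
      _ = ∑ p ∈ S, Pint β a m u p.1 * β u p.2 := by
          refine Finset.sum_congr rfl fun p _ => ?_
          unfold Pint
          rw [sup_eq_right.2 hu.1]
  calc Pint β a (m+1) t y
      = ∫ s in e ⁻¹' B, (fun p => G (e.symm p)) (e s) := by
        unfold Pint
        rw [hsupt, hAB]
        refine setIntegral_congr_fun (hAB ▸ (measurableSet_orderedSimplex (m+1) a t)) ?_
        intro s _
        simp only [MeasurableEquiv.symm_apply_apply]
        rfl
    _ = ∫ p in B, G (e.symm p) :=
        (volume_preserving_piFinSuccAbove (fun _ : Fin (m+1) => ℝ)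
          (Fin.last m)).setIntegral_preimage_emb e.measurableEmbedding
          (fun p => G (e.symm p)) B
    _ = ∫ p in B, gfun p := by
        refine setIntegral_congr_fun hBmeas fun p _ => ?_
        rw [hesymm p]
    _ = ∫ p : ℝ × (Fin m → ℝ), B.indicator gfun p := (integral_indicator hBmeas).symm
    _ = ∫ u : ℝ, ∫ sr : Fin m → ℝ, B.indicator gfun (u, sr) := by
        rw [Measure.volume_eq_prod]
        exact integral_prod _ hint
    _ = ∫ u : ℝ, (Set.Icc a t).indicator
          (fun u' => ∫ sr in orderedSimplex m a u', gfun (u', sr)) u := by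
        rw [show (fun u : ℝ => ∫ sr : Fin m → ℝ, B.indicator gfun (u, sr))
          = fun u => (Set.Icc a t).indicator
            (fun u' => ∫ sr in orderedSimplex m a u', gfun (u', sr)) u from funext pointwise1]
    _ = ∫ u in Set.Icc a t, ∫ sr in orderedSimplex m a u, gfun (u, sr) :=
        integral_indicator measurableSet_Icc
    _ = ∫ u in Set.Ioc a t, ∫ sr in orderedSimplex m a u, gfun (u, sr) :=
        integral_Icc_eq_integral_Ioc
    _ = ∫ u in a..t, ∫ sr in orderedSimplex m a u, gfun (u, sr) :=
        (intervalIntegral.integral_of_le hat).symm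
    _ = ∫ u in a..t, ∑ p ∈ S, Pint β a m u p.1 * β u p.2 := by
        refine intervalIntegral.integral_congr fun u hu => ?_
        rw [Set.uIcc_of_le hat] at hu
        exact pointwise2 u hu

lemma Pint_cont {β : ℝ → (H →ₗ[ℂ] ℂ)} (hβcont : ∀ x : H, Continuous fun t => β t x)
    (a : ℝ) : ∀ m (y : H), Continuous fun u => Pint β a m u y := by
  intro m
  induction m with
  | zero =>
      intro y
      have : (fun u => Pint β a 0 u y) = fun _ => Coalgebra.counit (R := ℂ) y :=
        funext fun u => Pint_zero_apply a u y
      rw [this]; exact continuous_const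
  | succ m ih =>
      intro y
      obtain ⟨S, hS⟩ := TensorProduct.exists_finset (Coalgebra.comul (R := ℂ) y)
      set h : ℝ → ℂ := fun u => ∑ p ∈ S, Pint β a m u p.1 * β u p.2 with hh
      have hconth : Continuous h :=
        continuous_finset_sum _ fun p _ => (ih p.1).mul (hβcont p.2)
      set F : ℝ → ℂ := fun v => ∫ u in a..v, h u with hF
      have hFeq : ∀ v, Pint β a (m+1) v y = F (a ⊔ v) := by
        intro v
        rcases le_total a v with hv | hv
        · rw [sup_eq_right.2 hv]
          exact Pint_rec hβcont a m y hS hv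
        · rw [sup_eq_left.2 hv, Pint_at_le a m hv y, hF]
          simp [intervalIntegral.integral_same]
      have hFcont : Continuous F := by
        rw [hF]
        exact continuous_iff_continuousAt.2 fun v =>
          ((hconth.integral_hasStrictDerivAt a v).hasDerivAt).continuousAt
      rw [show (fun u => Pint β a (m+1) u y) = fun u => F (a ⊔ u) from funext hFeq]
      exact hFcont.comp (continuous_const.sup continuous_id)

lemma Pint_deriv {β : ℝ → (H →ₗ[ℂ] ℂ)} (hβcont : ∀ x : H, Continuous fun t => β t x)
    {a b : ℝ} (m : ℕ) (y : H) {S : Finset (H × H)}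
    (hS : Coalgebra.comul (R := ℂ) y = ∑ p ∈ S, p.1 ⊗ₜ[ℂ] p.2)
    {t : ℝ} (ht : t ∈ Set.Icc a b) :
    HasDerivWithinAt (fun u => Pint β a (m+1) u y)
      (∑ p ∈ S, Pint β a m t p.1 * β t p.2) (Set.Icc a b) t := by
  set h : ℝ → ℂ := fun u => ∑ p ∈ S, Pint β a m u p.1 * β u p.2 with hh
  have hconth : Continuous h :=
    continuous_finset_sum _ fun p _ => ((Pint_cont hβcont a m p.1).mul (hβcont p.2))
  have hFd : HasDerivAt (fun v => ∫ u in a..v, h u) (h t) t :=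
    (hconth.integral_hasStrictDerivAt a t).hasDerivAt
  refine (hFd.hasDerivWithinAt).congr ?_ ?_
  · intro u hu
    exact Pint_rec hβcont a m y hS hu.1
  · exact Pint_rec hβcont a m y hS ht.1

end ExpODELemmas

/-- **The expansional solves `dg = g ⋆ α dt`, uniquely.**  Let `H` be a commutative
Hopf algebra over ℂ, positively graded (internally, by `𝒜`) and connected, and `α(t)`,
`t ∈ [a,b]`, a family of infinitesimal characters with `t ↦ α(t)(x)` continuous for
every `x`.  Then the expansional `g_t = Te^{∫_a^t α(s)ds}` is (for each `t ∈ [a,b]`) a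
linear functional on `H`, satisfies `g_a = ε`, the function `t ↦ g_t(x)` is
continuously differentiable on `[a,b]` with `d/dt g_t(x) = (g_t ⋆ α(t))(x)` for every
`x ∈ H`, and `g` is the unique such solution: any family `h_t` of linear functionals
with `h_a = ε` and `d/dt h_t(x) = (h_t ⋆ α(t))(x)` for all `x` equals `g_t` on
`[a,b]`. -/
theorem expansional_solves_ODE
    {H : Type} [CommRing H] [HopfAlgebra ℂ H]
    (𝒜 : ℕ → Submodule ℂ H)
    (hinternal : DirectSum.IsInternal 𝒜)
    (hmul : ∀ (p q : ℕ) (x y : H), x ∈ 𝒜 p → y ∈ 𝒜 q → x * y ∈ 𝒜 (p + q))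
    (hcomul : ∀ (n : ℕ) (x : H), x ∈ 𝒜 n →
      Coalgebra.comul (R := ℂ) x ∈ ⨆ (p : ℕ) (_ : p ≤ n),
        LinearMap.range (TensorProduct.map (𝒜 p).subtype (𝒜 (n - p)).subtype))
    (hanti : ∀ (n : ℕ) (x : H), x ∈ 𝒜 n → HopfAlgebra.antipode (R := ℂ) x ∈ 𝒜 n)
    (hconn : 𝒜 0 = Submodule.span ℂ {(1 : H)})
    (a b : ℝ) (hab : a ≤ b)
    (α : ℝ → (H →ₗ[ℂ] ℂ))
    (hchar : ∀ t ∈ Set.Icc a b, IsInfinitesimalCharacter (α t))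
    (hcont : ∀ x : H, ContinuousOn (fun t => α t x) (Set.Icc a b)) :
    ∃ g : ℝ → (H →ₗ[ℂ] ℂ),
      (∀ t ∈ Set.Icc a b, ∀ x : H, g t x = expansional α a t x) ∧
      g a = Coalgebra.counit ∧
      (∀ (x : H), ∀ t ∈ Set.Icc a b,
        HasDerivWithinAt (fun u => g u x) (conv (g t) (α t) x) (Set.Icc a b) t) ∧
      (∀ x : H, ContinuousOn (fun t => conv (g t) (α t) x) (Set.Icc a b)) ∧
      (∀ h : ℝ → (H →ₗ[ℂ] ℂ), h a = Coalgebra.counit →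
        (∀ (x : H), ∀ t ∈ Set.Icc a b,
          HasDerivWithinAt (fun u => h u x) (conv (h t) (α t) x) (Set.Icc a b) t) →
        ∀ t ∈ Set.Icc a b, h t = g t) := by
  classical

  -- clamp α to [a,b]
  set π : ℝ → ℝ := fun t => a ⊔ (b ⊓ t) with hπ
  have hπmem : ∀ t, π t ∈ Set.Icc a b := fun t => ⟨le_sup_left, sup_le hab inf_le_left⟩
  have hπid : ∀ t ∈ Set.Icc a b, π t = t := by
    intro t ht
    rw [hπ]; dsimp only
    rw [inf_eq_right.2 ht.2, sup_eq_right.2 ht.1]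
  set β : ℝ → (H →ₗ[ℂ] ℂ) := fun t => α (π t) with hβ
  have hβchar : ∀ t, IsInfinitesimalCharacter (β t) := fun t => hchar _ (hπmem t)
  have hβcont : ∀ x : H, Continuous fun t => β t x := by
    intro x
    refine (hcont x).comp_continuous ?_ hπmem
    exact continuous_const.sup (continuous_const.inf continuous_id)
  have hβeq : ∀ t ∈ Set.Icc a b, β t = α t := by
    intro t ht
    rw [hβ]; dsimp only; rw [hπid t ht]
  choose Nb hNb using fun x : H =>
    exists_convFam_bound hinternal hcomul hconn x
  have hterm0 : ∀ (t : ℝ) (x : H) (m : ℕ), Nb x ≤ m → Pint β a (m+1) t x = 0 := by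
    intro t x m hm
    exact Pint_zero_of_bound hβchar a (hNb x) (by omega) t
  set gfun : ℝ → H → ℂ :=
    fun t x => Coalgebra.counit (R := ℂ) x + ∑' m : ℕ, Pint β a (m+1) t x with hgfun
  have hsumN : ∀ (t : ℝ) (x : H) (K : ℕ), Nb x ≤ K →
      gfun t x = Coalgebra.counit (R := ℂ) x + ∑ m ∈ Finset.range K, Pint β a (m+1) t x := by
    intro t x K hK
    rw [hgfun]; dsimp only
    congr 1
    refine tsum_eq_sum fun m hm => ?_
    rw [Finset.mem_range, not_lt] at hm
    exact hterm0 t x m (le_trans hK hm)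
  -- the candidate solution as a family of linear maps
  set g : ℝ → (H →ₗ[ℂ] ℂ) := fun t =>
    { toFun := gfun t
      map_add' := by
        intro x y
        show gfun t (x + y) = gfun t x + gfun t y
        set K := Nb x ⊔ Nb y with hK
        have hxy : gfun t (x + y) = Coalgebra.counit (R := ℂ) (x + y)
            + ∑ m ∈ Finset.range K, Pint β a (m+1) t (x + y) := by
          rw [hgfun]; dsimp only
          congr 1
          refine tsum_eq_sum fun m hm => ?_
          rw [Finset.mem_range, not_lt] at hm
          rw [Pint_add hβcont a (m+1) t x y,
            hterm0 t x m (le_trans le_sup_left hm), hterm0 t y m (le_trans le_sup_right hm),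
            add_zero]
        rw [hxy, hsumN t x K le_sup_left, hsumN t y K le_sup_right, map_add]
        have : ∑ m ∈ Finset.range K, Pint β a (m+1) t (x + y)
            = ∑ m ∈ Finset.range K, (Pint β a (m+1) t x + Pint β a (m+1) t y) :=
          Finset.sum_congr rfl fun m _ => Pint_add hβcont a (m+1) t x y
        rw [this, Finset.sum_add_distrib]
        ring
      map_smul' := by
        intro c x
        show gfun t (c • x) = (RingHom.id ℂ) c • gfun t x
        have hcx : gfun t (c • x) = Coalgebra.counit (R := ℂ) (c • x)
            + ∑ m ∈ Finset.range (Nb x), Pint β a (m+1) t (c • x) := by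
          rw [hgfun]; dsimp only
          congr 1
          refine tsum_eq_sum fun m hm => ?_
          rw [Finset.mem_range, not_lt] at hm
          rw [Pint_smul a (m+1) t c x, hterm0 t x m hm, mul_zero]
        rw [hcx, LinearMap.map_smul]
        have : ∑ m ∈ Finset.range (Nb x), Pint β a (m+1) t (c • x)
            = ∑ m ∈ Finset.range (Nb x), c * Pint β a (m+1) t x :=
          Finset.sum_congr rfl fun m _ => Pint_smul a (m+1) t c x
        rw [this, ← Finset.mul_sum, hsumN t x (Nb x) le_rfl]
        simp only [RingHom.id_apply, smul_eq_mul]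
        ring } with hg
  have hgapp : ∀ t x, g t x = gfun t x := fun t x => rfl
  -- (1) identification with the expansional
  have hexp : ∀ t ∈ Set.Icc a b, ∀ x : H, g t x = expansional α a t x := by
    intro t ht x
    rw [hgapp, hgfun]; dsimp only
    unfold expansional
    congr 1
    refine tsum_congr fun m => ?_
    unfold Pint
    rw [sup_eq_right.2 ht.1]
    refine setIntegral_congr_fun (measurableSet_orderedSimplex (m+1) a t) fun s hs => ?_
    have : (fun i => β (s i)) = fun i => α (s i) := by
      funext i
      rw [hβeq (s i) ⟨(hs.2 i).1, le_trans (hs.2 i).2 ht.2⟩]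
    rw [this]
  -- (2) initial condition
  have hinit : g a = Coalgebra.counit := by
    refine LinearMap.ext fun x => ?_
    rw [hgapp, hgfun]; dsimp only
    have : ∀ m : ℕ, Pint β a (m+1) a x = 0 := fun m => Pint_at_le a m le_rfl x
    rw [show (fun m : ℕ => Pint β a (m+1) a x) = fun _ => (0 : ℂ) from funext this]
    rw [tsum_zero, add_zero]
  -- continuity of t ↦ g t z
  have hgcont : ∀ z : H, Continuous fun t => g t z := by
    intro z
    have : (fun t => g t z) = fun t => Coalgebra.counit (R := ℂ) z
        + ∑ m ∈ Finset.range (Nb z), Pint β a (m+1) t z :=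
      funext fun t => by rw [hgapp]; exact hsumN t z (Nb z) le_rfl
    rw [this]
    exact continuous_const.add
      (continuous_finset_sum _ fun m _ => Pint_cont hβcont a (m+1) z)
  -- (3) the differential equation
  have hderiv : ∀ (x : H), ∀ t ∈ Set.Icc a b,
      HasDerivWithinAt (fun u => g u x) (conv (g t) (α t) x) (Set.Icc a b) t := by
    intro x t ht
    obtain ⟨S, hS⟩ := TensorProduct.exists_finset (Coalgebra.comul (R := ℂ) x)
    set K' : ℕ := Nb x ⊔ S.sup (fun p => Nb p.1) with hK'
    have hKx : Nb x ≤ K' + 1 := le_trans le_sup_left (Nat.le_succ K')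
    have hgx : ∀ u, g u x = Coalgebra.counit (R := ℂ) x
        + ∑ m ∈ Finset.range (K' + 1), Pint β a (m+1) u x :=
      fun u => by rw [hgapp]; exact hsumN u x (K' + 1) hKx
    have hder1 : HasDerivWithinAt
        (fun u => Coalgebra.counit (R := ℂ) x
          + ∑ m ∈ Finset.range (K' + 1), Pint β a (m+1) u x)
        (∑ m ∈ Finset.range (K' + 1), ∑ p ∈ S, Pint β a m t p.1 * β t p.2)
        (Set.Icc a b) t := by
      refine HasDerivWithinAt.const_add _ ?_
      exact HasDerivWithinAt.fun_sum fun m _ => Pint_deriv hβcont m x hS ht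
    have hDval : (∑ m ∈ Finset.range (K' + 1), ∑ p ∈ S, Pint β a m t p.1 * β t p.2)
        = conv (g t) (α t) x := by
      rw [conv_apply_sum (g t) (α t) hS, Finset.sum_comm]
      refine Finset.sum_congr rfl fun p hp => ?_
      rw [← Finset.sum_mul]
      have h01 : ∑ m ∈ Finset.range (K' + 1), Pint β a m t p.1
          = Coalgebra.counit (R := ℂ) p.1 + ∑ m ∈ Finset.range K', Pint β a (m+1) t p.1 := by
        rw [Finset.sum_range_succ', Pint_zero_apply]
        ring
      have hNp : Nb p.1 ≤ K' :=
        le_trans (Finset.le_sup (f := fun q : H × H => Nb q.1) hp) le_sup_right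
      rw [h01, ← hsumN t p.1 K' hNp, ← hgapp, hβeq t ht]
    rw [show (fun u => g u x) = fun u => Coalgebra.counit (R := ℂ) x
      + ∑ m ∈ Finset.range (K' + 1), Pint β a (m+1) u x from funext hgx, ← hDval]
    exact hder1
  -- (4) continuity of the right-hand side
  have hconvcont : ∀ x : H, ContinuousOn (fun t => conv (g t) (α t) x) (Set.Icc a b) := by
    intro x
    obtain ⟨S, hS⟩ := TensorProduct.exists_finset (Coalgebra.comul (R := ℂ) x)
    have hc : Continuous fun t => ∑ p ∈ S, g t p.1 * β t p.2 :=
      continuous_finset_sum _ fun p _ => (hgcont p.1).mul (hβcont p.2)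
    refine ContinuousOn.congr hc.continuousOn ?_
    intro t ht
    show conv (g t) (α t) x = ∑ p ∈ S, g t p.1 * β t p.2
    rw [conv_apply_sum _ _ hS, hβeq t ht]
  -- (5) uniqueness
  have huniq : ∀ hF : ℝ → (H →ₗ[ℂ] ℂ), hF a = Coalgebra.counit →
      (∀ (x : H), ∀ t ∈ Set.Icc a b,
        HasDerivWithinAt (fun u => hF u x) (conv (hF t) (α t) x) (Set.Icc a b) t) →
      ∀ t ∈ Set.Icc a b, hF t = g t := by
    intro hF hFa hFderiv
    have master : ∀ n : ℕ, ∀ x ∈ 𝒜 n, ∀ t ∈ Set.Icc a b, hF t x = g t x := by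
      intro n
      induction n using Nat.strong_induction_on with
      | _ n IH =>
        intro x hx t ht
        set φ : ℝ → ℂ := fun u => hF u x - g u x with hφ
        have hder0 : ∀ u ∈ Set.Icc a b, HasDerivWithinAt φ 0 (Set.Icc a b) u := by
          intro u hu
          have hdd := (hFderiv x u hu).sub (hderiv x u hu)
          have hzero : conv (hF u) (α u) x - conv (g u) (α u) x = 0 := by
            have hrep : conv (hF u) (α u) x - conv (g u) (α u) x
                = ((LinearMap.mul' ℂ ℂ ∘ₗ TensorProduct.map (hF u) (α u))
                  - (LinearMap.mul' ℂ ℂ ∘ₗ TensorProduct.map (g u) (α u)))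
                    (Coalgebra.comul (R := ℂ) x) := by
              rw [LinearMap.sub_apply]; rfl
            rw [hrep]
            refine comul_ann hcomul hx _ ?_
            intro p hp y hy z hz
            simp only [LinearMap.sub_apply, LinearMap.comp_apply, TensorProduct.map_tmul,
              LinearMap.mul'_apply]
            rcases eq_or_lt_of_le hp with rfl | hplt
            · have hz0 : z ∈ 𝒜 0 := by
                rwa [Nat.sub_self] at hz
              rw [infChar_deg0 hconn (hchar u hu) hz0]
              ring
            · rw [IH p hplt y hy u hu]
              ring
          rw [hzero] at hdd
          exact hdd
        have hcontφ : ContinuousOn φ (Set.Icc a b) :=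
          fun u hu => (hder0 u hu).continuousWithinAt
        have hIci : ∀ u ∈ Set.Ico a b, HasDerivWithinAt φ 0 (Set.Ici u) u := by
          intro u hu
          exact (hder0 u ⟨hu.1, le_of_lt hu.2⟩).mono_of_mem_nhdsWithin
            (Icc_mem_nhdsGE_of_mem hu)
        have hconst := constant_of_has_deriv_right_zero hcontφ hIci t ht
        have hφa : φ a = 0 := by
          rw [hφ]; dsimp only
          rw [hFa, hinit, sub_self]
        rw [hφa] at hconst
        exact sub_eq_zero.mp hconst
    intro t ht
    refine LinearMap.ext fun x => ?_
    have hxtop : x ∈ ⨆ i, 𝒜 i := by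
      rw [hinternal.submodule_iSup_eq_top]; trivial
    refine Submodule.iSup_induction 𝒜 (motive := fun x => hF t x = g t x) hxtop ?_ ?_ ?_
    · intro n y hy
      exact master n y hy t ht
    · simp
    · intro y z h1 h2
      rw [map_add, map_add, h1, h2]
  exact ⟨g, hexp, hinit, hderiv, hconvcont, huniq⟩

end
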